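/- Let R be a finite commutative ring with identity 1 ≠ 0 which is not an integral domain. If the zero-divisor graph Γ(R) is a regular graph of degree r (every vertex has exactly r neighbours), then the independence number α(Γ(R)) equals either 1 or r. -/

import Mathlib

/-- The zero-divisor graph `Γ(R)`: vertices are the nonzero zero-divisors of `R`,
with distinct vertices `x`, `y` adjacent iff `x * y = 0`. -/
def zdvGraph (R : Type*) [CommRing R] :
    SimpleGraph {x : R // x ≠ 0 ∧ ∃ y ≠ 0, x * y = 0} where
  Adj x y := x ≠ y ∧ (x : R) * y = 0
  symm := ⟨fun x y ⟨hxy, h⟩ => ⟨hxy.symm, by rwa [mul_comm]⟩⟩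
  loopless := ⟨fun x ⟨h, _⟩ => h rfl⟩

/-- The independence number of a simple graph: the maximum cardinality of a set of
pairwise non-adjacent vertices. -/
noncomputable def indepNum {V : Type*} (G : SimpleGraph V) : ℕ :=
  sSup {n | ∃ s : Finset V, (s : Set V).Pairwise (fun a b => ¬ G.Adj a b) ∧ s.card = n}

/-!
In an `r`-regular `Γ(R)` the annihilator of a vertex `v` consists of its `r` neighbours, `0`, and
possibly `v` itself, so it has `r + 1` or `r + 2` elements, and at least two. Annihilators are
additive subgroups, so by Lagrange a strictly larger one would have at least `2 (r + 1)` elements: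
the annihilator of a vertex is maximal among those of vertices. Consequently a nilpotent vertex
squares to zero, and two such vertices annihilate each other. So if `Γ(R)` is not complete,
some vertex `x` is not nilpotent, and a power of `x` is an idempotent `e ≠ 0, 1`. Maximality
again shows that no two nonzero elements of `eR` multiply to zero and that every vertex lies in
`eR` or in `(1 - e)R`. Hence every independent set lies in one of these two parts; both are
independent and are the neighbourhoods of `1 - e` and of `e`, so they have `r` elements. If
`Γ(R)` is complete, its independence number is `1`.
-/

theorem exists_isIdempotentElem_pow {M : Type*} [Monoid M] [Finite M] (x : M) :
    ∃ n ≠ 0, IsIdempotentElem (x ^ n) := by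
  let : TopologicalSpace M := ⊥
  have : DiscreteTopology M := ⟨rfl⟩
  obtain ⟨_, ⟨n, rfl⟩, h⟩ := exists_idempotent_in_compact_subsemigroup
    (fun _ => continuous_of_discreteTopology) (Set.range fun n : ℕ => x ^ (n + 1))
    (Set.range_nonempty _) (Set.toFinite _).isCompact
    (by rintro _ ⟨i, rfl⟩ _ ⟨j, rfl⟩; exact ⟨i + j + 1, by rw [← pow_add]; ring_nf⟩)
  exact ⟨n + 1, n.succ_ne_zero, h⟩

theorem exists_isIdempotentElem_ne_zero_ne_one {M : Type*} [MonoidWithZero M] [Finite M]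
    {x y : M} (hx : ¬IsNilpotent x) (hy : y ≠ 0) (hxy : x * y = 0) :
    ∃ e : M, IsIdempotentElem e ∧ e ≠ 0 ∧ e ≠ 1 := by
  obtain ⟨n, hn, he⟩ := exists_isIdempotentElem_pow x
  refine ⟨x ^ n, he, fun h => hx ⟨n, h⟩, fun h => hy ?_⟩
  obtain ⟨m, rfl⟩ := Nat.exists_eq_succ_of_ne_zero hn
  rw [← one_mul y, ← h, pow_succ, mul_assoc, hxy, mul_zero]

theorem AddSubgroup.two_mul_card_le_card_of_lt {G : Type*} [AddGroup G] {H K : AddSubgroup G}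
    [Finite K] (h : H < K) : 2 * Nat.card H ≤ Nat.card K := by
  have : Finite H := Finite.of_injective _ (AddSubgroup.inclusion_injective h.le)
  obtain ⟨c, hc⟩ := AddSubgroup.card_dvd_of_le h.le
  have hH : Nat.card H ≠ 0 := Nat.card_pos.ne'
  have hK : Nat.card K ≠ 0 := Nat.card_pos.ne'
  have hc1 : c ≠ 1 := by
    rintro rfl
    exact h.ne (AddSubgroup.eq_of_le_of_card_ge h.le (by rw [hc, mul_one]))
  have hc0 : c ≠ 0 := by rintro rfl; simp_all
  rw [hc, mul_comm (Nat.card H)]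
  exact Nat.mul_le_mul_right _ (by omega : 2 ≤ c)

theorem indepNum_eq_simpleGraph_indepNum {V : Type*} (G : SimpleGraph V) :
    indepNum G = G.indepNum := by
  simp only [indepNum, SimpleGraph.indepNum, SimpleGraph.isNIndepSet_iff,
    SimpleGraph.isIndepSet_iff]

theorem indepNum_top {V : Type*} [Finite V] [Nonempty V] : indepNum (⊤ : SimpleGraph V) = 1 := by
  obtain ⟨v⟩ := ‹Nonempty V›
  rw [indepNum_eq_simpleGraph_indepNum, ← SimpleGraph.maximumIndepSet_card_eq_indepNum {v},
    Finset.card_singleton]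
  refine ⟨by simp, fun t ht => Finset.card_le_one.mpr fun a ha b hb => ?_⟩
  by_contra hab
  exact ht ha hb hab (by simpa using hab)

namespace ZeroDivisorGraph

variable {R : Type*} [CommRing R]

def ann (a : R) : AddSubgroup R := (AddMonoidHom.mulLeft a).ker

@[simp]
theorem mem_ann {a z : R} : z ∈ ann a ↔ a * z = 0 := Iff.rfl

theorem ann_le_ann_mul (a b : R) : ann a ≤ ann (b * a) := fun z hz => by
  rw [mem_ann, mul_assoc, mem_ann.mp hz, mul_zero]

theorem image_val_neighborSet (v : {x : R // x ≠ 0 ∧ ∃ y ≠ 0, x * y = 0}) :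
    Subtype.val '' (zdvGraph R).neighborSet v = (ann (v : R) : Set R) \ {0, (v : R)} := by
  ext z
  constructor
  · rintro ⟨w, ⟨hvw, hvw0⟩, rfl⟩
    refine ⟨hvw0, ?_⟩
    rintro (h | h)
    exacts [w.2.1 h, hvw (Subtype.ext h.symm)]
  · rintro ⟨hz, hz0v⟩
    simp only [Set.mem_insert_iff, Set.mem_singleton_iff, not_or] at hz0v
    exact ⟨⟨z, hz0v.1, v, v.2.1, by rw [mul_comm]; exact hz⟩,
      ⟨fun h => hz0v.2 (congrArg Subtype.val h).symm, hz⟩, rfl⟩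

theorem ncard_ann_diff {r : ℕ} (hreg : ∀ v, ((zdvGraph R).neighborSet v).ncard = r)
    (v : {x : R // x ≠ 0 ∧ ∃ y ≠ 0, x * y = 0}) :
    ((ann (v : R) : Set R) \ {0, (v : R)}).ncard = r := by
  rw [← image_val_neighborSet, Set.ncard_image_of_injective _ Subtype.val_injective, hreg]

/-- For an idempotent `e`, the vertices lying in the ideal `eR`. -/
def cornerVertices (e : R) : Set {x : R // x ≠ 0 ∧ ∃ y ≠ 0, x * y = 0} := {v | e * v = v}

theorem neighborSet_one_sub {e : R} (he : IsIdempotentElem e) (he0 : e ≠ 0) (he1 : e ≠ 1) :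
    (zdvGraph R).neighborSet
      ⟨1 - e, sub_ne_zero.mpr he1.symm, e, he0, by rw [sub_mul, one_mul, he.eq, sub_self]⟩ =
      cornerVertices e := by
  ext v
  have hadj : (1 - e) * (v : R) = 0 ↔ e * v = v := by
    rw [sub_mul, one_mul, sub_eq_zero, eq_comm]
  change (_ ≠ v ∧ (1 - e) * v = 0) ↔ e * v = v
  rw [hadj]
  refine ⟨And.right, fun hv => ⟨?_, hv⟩⟩
  rintro rfl
  have : e * (1 - e) = 1 - e := hv
  rw [mul_sub, mul_one, he.eq, sub_self] at this
  exact he1 (sub_eq_zero.mp this.symm).symm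

theorem ncard_cornerVertices {r : ℕ} (hreg : ∀ v, ((zdvGraph R).neighborSet v).ncard = r)
    {e : R} (he : IsIdempotentElem e) (he0 : e ≠ 0) (he1 : e ≠ 1) :
    (cornerVertices e).ncard = r :=
  neighborSet_one_sub he he0 he1 ▸ hreg _

variable [Finite R] {r : ℕ}

theorem card_ann_le (hreg : ∀ v, ((zdvGraph R).neighborSet v).ncard = r)
    (v : {x : R // x ≠ 0 ∧ ∃ y ≠ 0, x * y = 0}) : Nat.card (ann (v : R)) ≤ r + 2 := by
  rw [← SetLike.coe_sort_coe, Nat.card_coe_set_eq, ← ncard_ann_diff hreg v]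
  calc (ann (v : R) : Set R).ncard
      ≤ (insert 0 (insert (v : R) ((ann (v : R) : Set R) \ {0, (v : R)}))).ncard :=
        Set.ncard_le_ncard (fun z hz => by by_cases z = 0 <;> by_cases z = v <;> simp_all)
    _ ≤ _ := (Set.ncard_insert_le _ _).trans (Nat.add_le_add_right (Set.ncard_insert_le _ _) 1)

theorem card_ann_ge (hreg : ∀ v, ((zdvGraph R).neighborSet v).ncard = r)
    (v : {x : R // x ≠ 0 ∧ ∃ y ≠ 0, x * y = 0}) : r + 1 ≤ Nat.card (ann (v : R)) := by
  rw [← SetLike.coe_sort_coe, Nat.card_coe_set_eq, ← ncard_ann_diff hreg v,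
    ← Set.ncard_insert_of_notMem (a := 0) (by simp)]
  exact Set.ncard_le_ncard (Set.insert_subset (by simp) Set.sdiff_subset)

theorem one_lt_card_ann (v : {x : R // x ≠ 0 ∧ ∃ y ≠ 0, x * y = 0}) :
    1 < Nat.card (ann (v : R)) := by
  obtain ⟨y, hy, hvy⟩ := v.2.2
  rw [← SetLike.coe_sort_coe, Nat.card_coe_set_eq, Set.one_lt_ncard]
  exact ⟨0, by simp, y, hvy, hy.symm⟩

theorem ann_eq_of_le (hreg : ∀ v, ((zdvGraph R).neighborSet v).ncard = r)
    {a b : {x : R // x ≠ 0 ∧ ∃ y ≠ 0, x * y = 0}} (h : ann (a : R) ≤ ann (b : R)) :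
    ann (a : R) = ann (b : R) := by
  by_contra hne
  have := AddSubgroup.two_mul_card_le_card_of_lt (lt_of_le_of_ne h hne)
  have := card_ann_le hreg b
  have := card_ann_ge hreg a
  have := one_lt_card_ann a
  omega

theorem mul_self_eq_zero_of_isNilpotent (hreg : ∀ v, ((zdvGraph R).neighborSet v).ncard = r)
    (x : {x : R // x ≠ 0 ∧ ∃ y ≠ 0, x * y = 0}) (hx : IsNilpotent (x : R)) :
    (x : R) * x = 0 := by
  have : Nontrivial R := ⟨⟨x, 0, x.2.1⟩⟩
  by_contra hx2
  obtain ⟨m, hm⟩ : ∃ m, nilpotencyClass (x : R) = m + 3 := by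
    refine ⟨nilpotencyClass (x : R) - 3, ?_⟩
    have h1 : nilpotencyClass (x : R) ≠ 1 := fun h => x.2.1 (by
      simpa [h] using pow_nilpotencyClass hx)
    have h2 : nilpotencyClass (x : R) ≠ 2 := fun h => hx2 (by
      simpa [h, sq] using pow_nilpotencyClass hx)
    have h0 := (pos_nilpotencyClass_iff.mpr hx).ne'
    omega
  have hxm3 : (x : R) ^ (m + 3) = 0 := hm ▸ pow_nilpotencyClass hx
  have hxm2 : (x : R) ^ (m + 2) ≠ 0 := by
    simpa [hm] using pow_pred_nilpotencyClass hx
  let b : {x : R // x ≠ 0 ∧ ∃ y ≠ 0, x * y = 0} :=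
    ⟨(x : R) ^ (m + 2), hxm2, x, x.2.1, by rw [← pow_succ, hxm3]⟩
  have hle : ann (x : R) ≤ ann (b : R) := by
    simpa only [b, pow_succ] using ann_le_ann_mul (x : R) ((x : R) ^ (m + 1))
  have hmem : (x : R) ^ (m + 1) ∈ ann (b : R) := by
    rw [mem_ann, ← pow_add, show m + 2 + (m + 1) = m + 3 + m by ring, pow_add, hxm3, zero_mul]
  rw [← ann_eq_of_le hreg hle, mem_ann, ← pow_succ'] at hmem
  exact hxm2 hmem

theorem mul_eq_zero_of_mul_self_eq_zero (hreg : ∀ v, ((zdvGraph R).neighborSet v).ncard = r)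
    (v : {x : R // x ≠ 0 ∧ ∃ y ≠ 0, x * y = 0}) {w : R} (hv : (v : R) * v = 0)
    (hw : w * w = 0) :
    (v : R) * w = 0 := by
  by_contra hvw
  let b : {x : R // x ≠ 0 ∧ ∃ y ≠ 0, x * y = 0} :=
    ⟨w * v, by rwa [mul_comm], v, v.2.1, by rw [mul_assoc, hv, mul_zero]⟩
  have hmem : w ∈ ann (b : R) := by
    rw [mem_ann, mul_right_comm, hw, zero_mul]
  rw [← ann_eq_of_le hreg (ann_le_ann_mul (v : R) w), mem_ann] at hmem
  exact hvw hmem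

theorem mul_ne_zero_of_isIdempotentElem (hreg : ∀ v, ((zdvGraph R).neighborSet v).ncard = r)
    {e u w : R} (he : IsIdempotentElem e) (he1 : e ≠ 1) (hu : e * u = u) (hw : e * w = w)
    (hu0 : u ≠ 0) (hw0 : w ≠ 0) : u * w ≠ 0 := by
  intro huw
  have he0 : e ≠ 0 := by rintro rfl; exact hu0 (by rw [← hu, zero_mul])
  let e' : {x : R // x ≠ 0 ∧ ∃ y ≠ 0, x * y = 0} :=
    ⟨e, he0, 1 - e, sub_ne_zero.mpr he1.symm, by rw [mul_sub, mul_one, he.eq, sub_self]⟩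
  let u' : {x : R // x ≠ 0 ∧ ∃ y ≠ 0, x * y = 0} := ⟨u, hu0, w, hw0, huw⟩
  have hle : ann (e' : R) ≤ ann (u' : R) := by
    have := ann_le_ann_mul e u
    rwa [mul_comm, hu] at this
  have hmem : w ∈ ann (u' : R) := huw
  rw [← ann_eq_of_le hreg hle, mem_ann, hw] at hmem
  exact hw0 hmem

theorem mul_eq_zero_or_mul_eq_zero_of_isIdempotentElem
    (hreg : ∀ v, ((zdvGraph R).neighborSet v).ncard = r) {e v w : R} (he : IsIdempotentElem e)
    (he1 : e ≠ 1) (hvw : v * w = 0) : e * v = 0 ∨ e * w = 0 := by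
  by_contra! h
  refine mul_ne_zero_of_isIdempotentElem hreg he he1 ?_ ?_ h.1 h.2 ?_
  · rw [← mul_assoc, he.eq]
  · rw [← mul_assoc, he.eq]
  · rw [mul_mul_mul_comm, he.eq, hvw, mul_zero]

theorem mem_cornerVertices_or_mem_cornerVertices_one_sub
    (hreg : ∀ v, ((zdvGraph R).neighborSet v).ncard = r) {e : R} (he : IsIdempotentElem e)
    (he0 : e ≠ 0) (he1 : e ≠ 1) (v : {x : R // x ≠ 0 ∧ ∃ y ≠ 0, x * y = 0}) :
    v ∈ cornerVertices e ∨ v ∈ cornerVertices (1 - e) := by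
  obtain ⟨w, hw0, hvw⟩ := v.2.2
  have hfe1 : 1 - e ≠ 1 := fun h => he0 (sub_eq_self.mp h)
  rcases mul_eq_zero_or_mul_eq_zero_of_isIdempotentElem hreg he.one_sub hfe1 hvw with h | h
  · exact Or.inl (by rwa [sub_mul, one_mul, sub_eq_zero, eq_comm] at h)
  rcases mul_eq_zero_or_mul_eq_zero_of_isIdempotentElem hreg he he1 hvw with h' | h'
  · exact Or.inr (show (1 - e) * v = v by rw [sub_mul, one_mul, h', sub_zero])
  · exact absurd (by rwa [sub_mul, one_mul, h', sub_zero] at h) hw0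

theorem isIndepSet_cornerVertices (hreg : ∀ v, ((zdvGraph R).neighborSet v).ncard = r) {e : R}
    (he : IsIdempotentElem e) (he1 : e ≠ 1) : (zdvGraph R).IsIndepSet (cornerVertices e) :=
  fun u hu w hw _ huw => mul_ne_zero_of_isIdempotentElem hreg he he1 hu hw u.2.1 w.2.1 huw.2

theorem subset_cornerVertices_of_isIndepSet (hreg : ∀ v, ((zdvGraph R).neighborSet v).ncard = r)
    {e : R} (he : IsIdempotentElem e) (he0 : e ≠ 0) (he1 : e ≠ 1)
    {s : Set {x : R // x ≠ 0 ∧ ∃ y ≠ 0, x * y = 0}} (hs : (zdvGraph R).IsIndepSet s) :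
    s ⊆ cornerVertices e ∨ s ⊆ cornerVertices (1 - e) := by
  by_contra! h
  obtain ⟨⟨u, hu, hue⟩, ⟨z, hz, hzf⟩⟩ := And.imp Set.not_subset.mp Set.not_subset.mp h
  have hzf : z ∈ cornerVertices e :=
    (mem_cornerVertices_or_mem_cornerVertices_one_sub hreg he he0 he1 z).resolve_right hzf
  have huf : u ∈ cornerVertices (1 - e) :=
    (mem_cornerVertices_or_mem_cornerVertices_one_sub hreg he he0 he1 u).resolve_left hue
  have hne : z ≠ u := fun h => hue (h ▸ hzf)
  refine hs hz hu hne ⟨hne, ?_⟩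
  rw [← show e * z = z from hzf, ← show (1 - e) * u = u from huf, mul_mul_mul_comm, mul_sub,
    mul_one, he.eq, sub_self, zero_mul]

theorem indepNum_eq_of_isIdempotentElem (hreg : ∀ v, ((zdvGraph R).neighborSet v).ncard = r)
    {e : R} (he : IsIdempotentElem e) (he0 : e ≠ 0) (he1 : e ≠ 1) :
    indepNum (zdvGraph R) = r := by
  classical
  have hfin := Set.toFinite (cornerVertices e)
  have hcard : hfin.toFinset.card = r := by
    rw [← Set.ncard_eq_toFinset_card _ hfin, ncard_cornerVertices hreg he he0 he1]
  rw [indepNum_eq_simpleGraph_indepNum,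
    ← SimpleGraph.maximumIndepSet_card_eq_indepNum hfin.toFinset, hcard]
  refine ⟨by simpa using isIndepSet_cornerVertices hreg he he1, fun t ht => ?_⟩
  rw [hcard, ← Set.ncard_coe_finset]
  rcases subset_cornerVertices_of_isIndepSet hreg he he0 he1 ht with h | h
  · exact (Set.ncard_le_ncard h).trans_eq (ncard_cornerVertices hreg he he0 he1)
  · exact (Set.ncard_le_ncard h).trans_eq (ncard_cornerVertices hreg he.one_sub
      (sub_ne_zero.mpr he1.symm) fun h => he0 (sub_eq_self.mp h))

end ZeroDivisorGraph

open ZeroDivisorGraph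

theorem stmt4 (R : Type*) [CommRing R] [Nontrivial R] [Finite R]
    (hnd : ¬ IsDomain R) (r : ℕ)
    (hreg : ∀ v, ((zdvGraph R).neighborSet v).ncard = r) :
    indepNum (zdvGraph R) = 1 ∨ indepNum (zdvGraph R) = r := by
  obtain ⟨a, b, hab, ha, hb⟩ : ∃ a b : R, a * b = 0 ∧ a ≠ 0 ∧ b ≠ 0 := by
    by_contra! h
    have : NoZeroDivisors R := ⟨fun {a b} hab => or_iff_not_imp_left.mpr (h a b hab)⟩
    exact hnd (NoZeroDivisors.to_isDomain R)
  have : Nonempty {x : R // x ≠ 0 ∧ ∃ y ≠ 0, x * y = 0} := ⟨⟨a, ha, b, hb, hab⟩⟩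
  by_cases htop : zdvGraph R = ⊤
  · exact Or.inl (htop ▸ indepNum_top)
  obtain ⟨v, w, hvw, hadj⟩ := SimpleGraph.ne_top_iff_exists_not_adj.mp htop
  -- some vertex is not nilpotent: two nilpotent vertices would annihilate each other
  obtain ⟨x, hx⟩ :
      ∃ x : {x : R // x ≠ 0 ∧ ∃ y ≠ 0, x * y = 0}, ¬IsNilpotent (x : R) := by
    by_contra! h
    exact hadj ⟨hvw, mul_eq_zero_of_mul_self_eq_zero hreg v
      (mul_self_eq_zero_of_isNilpotent hreg v (h v))
      (mul_self_eq_zero_of_isNilpotent hreg w (h w))⟩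
  obtain ⟨y, hy, hxy⟩ := x.2.2
  obtain ⟨e, he, he0, he1⟩ := exists_isIdempotentElem_ne_zero_ne_one hx hy hxy
  exact Or.inr (indepNum_eq_of_isIdempotentElem hreg he he0 he1)
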